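/- arXiv:1808.10581 — 10 statements merged into one kernel-verified Lean document; each statement's English description precedes it below -/
import Mathlib

section
/- If φ : C[0,1]_{(a,k)} → C[0,1] is the positive linear map defined by φ(g)(x) = g(x₀)·(a+kx)/(a+k) for a fixed x₀ ∈ (0,1), then φ has operator norm 1, but its natural unital extension φ̃ to C[0,1] (defined via the direct sum decomposition C[0,1] = C[0,1]_{(a,k)} ⊕ ℝ by φ̃(λ + g) = λ + φ(g)) is not positive. -/
open ContinuousMap

theorem stmt1 (a k : ℕ) (ha : 0 < a) (hk : 0 < k) (x₀ : unitInterval)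
    (hx₀ : (x₀ : ℝ) ∈ Set.Ioo (0 : ℝ) 1)
    (φ : C(unitInterval, ℝ) → C(unitInterval, ℝ))
    (hφ : ∀ (g : C(unitInterval, ℝ)) (x : unitInterval),
      φ g x = g x₀ * ((a : ℝ) + (k : ℝ) * (x : ℝ)) / ((a : ℝ) + (k : ℝ)))
    (φt : C(unitInterval, ℝ) → C(unitInterval, ℝ))
    (hφt : ∀ (f : C(unitInterval, ℝ)) (x : unitInterval),
      φt f x = (((a : ℝ) + (k : ℝ)) * f 0 - (a : ℝ) * f 1) / (k : ℝ) +
        (f x₀ - (((a : ℝ) + (k : ℝ)) * f 0 - (a : ℝ) * f 1) / (k : ℝ)) *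
          ((a : ℝ) + (k : ℝ) * (x : ℝ)) / ((a : ℝ) + (k : ℝ))) :
    (∀ g : C(unitInterval, ℝ), g 0 = (a : ℝ) / ((a : ℝ) + (k : ℝ)) * g 1 → ‖φ g‖ ≤ ‖g‖) ∧
    (∃ g : C(unitInterval, ℝ), g 0 = (a : ℝ) / ((a : ℝ) + (k : ℝ)) * g 1 ∧
      ‖g‖ = 1 ∧ ‖φ g‖ = 1) ∧
    (∃ f : C(unitInterval, ℝ), (∀ x, 0 ≤ f x) ∧ ¬ (∀ x, 0 ≤ φt f x)) := by
  have haR : (0:ℝ) < a := by exact_mod_cast ha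
  have hkR : (0:ℝ) < k := by exact_mod_cast hk
  have hak : (0:ℝ) < (a:ℝ) + k := by linarith
  have hx0 : (0:ℝ) < (x₀:ℝ) := hx₀.1
  have hx1 : (x₀:ℝ) < 1 := hx₀.2
  -- factor bound
  have hfac : ∀ x : unitInterval, 0 ≤ ((a:ℝ) + k * x) / ((a:ℝ) + k) ∧
      ((a:ℝ) + k * x) / ((a:ℝ) + k) ≤ 1 := by
    intro x
    have h0 : (0:ℝ) ≤ (x:ℝ) := x.2.1
    have h1 : (x:ℝ) ≤ 1 := x.2.2
    constructor
    · positivity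
    · rw [div_le_one hak]; nlinarith
  refine ⟨?_, ?_, ?_⟩
  · intro g _
    refine (ContinuousMap.norm_le _ (norm_nonneg g)).2 fun x => ?_
    rw [hφ]
    have hb := g.norm_coe_le_norm x₀
    have hf := hfac x
    rw [Real.norm_eq_abs] at hb ⊢
    rw [mul_div_assoc, abs_mul, abs_of_nonneg hf.1]
    calc |g x₀| * (((a:ℝ) + k * x) / ((a:ℝ) + k)) ≤ |g x₀| * 1 := by
          exact mul_le_mul_of_nonneg_left hf.2 (abs_nonneg _)
      _ ≤ ‖g‖ := by rw [mul_one]; exact hb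
  · -- the ramp function
    set c : ℝ := (k:ℝ) / (x₀:ℝ) with hc
    have hck : (k:ℝ) ≤ c := by
      rw [hc, le_div_iff₀ hx0]; nlinarith
    refine ⟨⟨fun x => min 1 (((a:ℝ) + c * x) / ((a:ℝ) + k)), by fun_prop⟩, ?_, ?_, ?_⟩
    · -- boundary condition
      simp only [ContinuousMap.coe_mk]
      have h0 : ((0:unitInterval):ℝ) = 0 := rfl
      have h1 : ((1:unitInterval):ℝ) = 1 := rfl
      rw [h0, h1, mul_zero, add_zero, mul_one]
      have e0 : min 1 ((a:ℝ) / ((a:ℝ) + k)) = (a:ℝ) / ((a:ℝ) + k) := by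
        rw [min_eq_right]; rw [div_le_one hak]; linarith
      have e1 : min 1 (((a:ℝ) + c) / ((a:ℝ) + k)) = 1 := by
        rw [min_eq_left]; rw [le_div_iff₀ hak]; linarith
      rw [e0, e1, mul_one]
    · -- norm g = 1
      have hgx₀ : min 1 (((a:ℝ) + c * x₀) / ((a:ℝ) + k)) = 1 := by
        rw [min_eq_left]
        rw [le_div_iff₀ hak, hc, div_mul_cancel₀ _ hx0.ne']
        linarith
      apply le_antisymm
      · refine (ContinuousMap.norm_le _ zero_le_one).2 fun x => ?_
        simp only [ContinuousMap.coe_mk, Real.norm_eq_abs]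
        have h0 : (0:ℝ) ≤ (x:ℝ) := x.2.1
        have ht : (0:ℝ) ≤ ((a:ℝ) + c * x) / ((a:ℝ) + k) := by
          have : (0:ℝ) ≤ c := le_trans hkR.le hck
          positivity
        rw [abs_le]
        constructor
        · have := le_min zero_le_one ht
          linarith
        · exact min_le_left _ _
      · have := ContinuousMap.norm_coe_le_norm
          (⟨fun x => min 1 (((a:ℝ) + c * x) / ((a:ℝ) + k)), by fun_prop⟩ :
            C(unitInterval, ℝ)) x₀
        simp only [ContinuousMap.coe_mk, Real.norm_eq_abs, hgx₀, abs_one] at this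
        exact this
    · -- norm φ g = 1
      have hgx₀ : min 1 (((a:ℝ) + c * x₀) / ((a:ℝ) + k)) = 1 := by
        rw [min_eq_left]
        rw [le_div_iff₀ hak, hc, div_mul_cancel₀ _ hx0.ne']
        linarith
      have hval : ∀ x : unitInterval, φ (⟨fun x => min 1 (((a:ℝ) + c * x) / ((a:ℝ) + k)),
          by fun_prop⟩ : C(unitInterval, ℝ)) x = ((a:ℝ) + k * x) / ((a:ℝ) + k) := by
        intro x
        rw [hφ]
        simp only [ContinuousMap.coe_mk, hgx₀, one_mul]
      apply le_antisymm
      · refine (ContinuousMap.norm_le _ zero_le_one).2 fun x => ?_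
        rw [hval, Real.norm_eq_abs, abs_of_nonneg (hfac x).1]
        exact (hfac x).2
      · have hb := ContinuousMap.norm_coe_le_norm
          (φ (⟨fun x => min 1 (((a:ℝ) + c * x) / ((a:ℝ) + k)),
            by fun_prop⟩ : C(unitInterval, ℝ))) 1
        rw [hval, Real.norm_eq_abs] at hb
        have h1 : ((1:unitInterval):ℝ) = 1 := rfl
        rw [h1, mul_one, div_self hak.ne', abs_one] at hb
        exact hb
  · -- non-positivity of the extension
    refine ⟨⟨fun x => max 0 (((x:ℝ) - x₀) / (1 - x₀)), by fun_prop⟩, fun x => le_max_left _ _, ?_⟩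
    intro hpos
    have h := hpos 0
    rw [hφt] at h
    have h0 : ((0:unitInterval):ℝ) = 0 := rfl
    have h1 : ((1:unitInterval):ℝ) = 1 := rfl
    simp only [ContinuousMap.coe_mk, h0, h1] at h
    have hx1' : (0:ℝ) < 1 - x₀ := by linarith
    have e0 : max 0 (((0:ℝ) - x₀) / (1 - x₀)) = 0 := by
      rw [max_eq_left]
      apply div_nonpos_of_nonpos_of_nonneg <;> linarith
    have e1 : max 0 (((1:ℝ) - x₀) / (1 - x₀)) = 1 := by
      rw [div_self hx1'.ne', max_eq_right zero_le_one]
    have ex : max 0 (((x₀:ℝ) - x₀) / (1 - x₀)) = 0 := by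
      rw [sub_self, zero_div, max_self]
    rw [e0, e1, ex] at h
    have : (((a:ℝ) + k) * 0 - a * 1) / k + (0 - (((a:ℝ) + k) * 0 - a * 1) / k) *
        ((a:ℝ) + k * 0) / ((a:ℝ) + k) = -(a / ((a:ℝ) + k)) := by
      field_simp
      ring
    rw [this] at h
    have : (0:ℝ) < a / ((a:ℝ) + k) := by positivity
    linarith
end

section
/- A positive linear map φ : C[0,1]_{(a,k)} → C[0,1] is positively extendible (i.e., its natural unital extension φ̃(λ+g) = λ + φ(g) to C[0,1] is a positive map) if and only if inf over upper test functions γ of φ(γ) ≥ 1 ≥ sup over lower test functions e of φ(e), where the infimum and supremum are taken pointwise. -/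
open ContinuousMap

/-- The subspace `C[0,1]_{(a,k)} = {f : f(0) = (a/(a+k)) f(1)}`. -/
def InSub (a k : ℕ) (f : C(unitInterval, ℝ)) : Prop :=
  f 0 = (a : ℝ) / ((a : ℝ) + (k : ℝ)) * f 1

/-- The scalar part `λ = ((a+k) f(0) - a f(1))/k` of the decomposition `f = λ + g`. -/
noncomputable def lamPart (a k : ℕ) (f : C(unitInterval, ℝ)) : ℝ :=
  (((a : ℝ) + (k : ℝ)) * f 0 - (a : ℝ) * f 1) / (k : ℝ)

/-- `φ` is positively extendible: its natural unital extension
`φ̃(f) = λ_f + φ(f - λ_f)` is positive. -/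
def PosExt (a k : ℕ) (φ : C(unitInterval, ℝ) → C(unitInterval, ℝ)) : Prop :=
  ∀ f : C(unitInterval, ℝ), (∀ x, 0 ≤ f x) →
    ∀ x, 0 ≤ lamPart a k f +
      φ (f - ContinuousMap.const unitInterval (lamPart a k f)) x

/-- Lower test function `e_δ`. -/
def IsLowerTest (a k : ℕ) (e : C(unitInterval, ℝ)) : Prop :=
  InSub a k e ∧ e 0 = (a : ℝ) / ((a : ℝ) + (k : ℝ)) ∧
    (∀ x, e x ∈ Set.Icc ((a : ℝ) / ((a : ℝ) + (k : ℝ))) 1) ∧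
    ∃ δ : ℝ, 0 < δ ∧ δ ≤ 1 ∧ ∀ x : unitInterval, δ ≤ (x : ℝ) → e x = 1

/-- Upper test function `γ_σ`. -/
def IsUpperTest (a k : ℕ) (γ : C(unitInterval, ℝ)) : Prop :=
  InSub a k γ ∧ γ 1 = ((a : ℝ) + (k : ℝ)) / (a : ℝ) ∧
    (∀ x, γ x ∈ Set.Icc (1 : ℝ) (((a : ℝ) + (k : ℝ)) / (a : ℝ))) ∧
    ∃ σ : ℝ, 0 ≤ σ ∧ σ < 1 ∧ ∀ x : unitInterval, (x : ℝ) ≤ 1 - σ → γ x = 1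

/-!
Every `f ∈ C[0,1]` splits as `λ + g` with `g ∈ C[0,1]_{(a,k)}`, so positive extendibility means
that `λ + g ≥ 0` implies `λ + φ(g) ≥ 0`; applied to `γ - 1` and `1 - e` this gives the two
inequalities. Conversely, if `λ ≥ 0`, a lower test function `e` reaching `1` close enough to `0`
makes `g + λ e` nonnegative up to an arbitrarily small error (near `0`, `g ≈ g(0) = (a/(a+k)) g(1)`
and `e ≥ a/(a+k)`), whence `λ + φ(g) ≥ λ φ(e) + φ(g) ≳ 0`; if `λ < 0`, an upper test function
leaving `1` close enough to `1` does the same. The error is absorbed by a fixed upper test function.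
-/

open Filter Topology

structure IsPositiveOnSub (a k : ℕ) (φ : C(unitInterval, ℝ) → C(unitInterval, ℝ)) : Prop where
  map_add : ∀ f g, InSub a k f → InSub a k g → φ (f + g) = φ f + φ g
  map_smul : ∀ (c : ℝ) f, InSub a k f → φ (c • f) = c • φ f
  nonneg : ∀ f, InSub a k f → (∀ x, 0 ≤ f x) → ∀ x, 0 ≤ φ f x

section InSub

variable {a k : ℕ}

lemma InSub.add {f g : C(unitInterval, ℝ)} (hf : InSub a k f) (hg : InSub a k g) :
    InSub a k (f + g) := by
  simp only [InSub, ContinuousMap.add_apply] at *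
  rw [hf, hg]; ring

lemma InSub.smul (c : ℝ) {f : C(unitInterval, ℝ)} (hf : InSub a k f) : InSub a k (c • f) := by
  simp only [InSub, ContinuousMap.smul_apply, smul_eq_mul] at *
  rw [hf]; ring

lemma inSub_sub_const_lamPart (hk : 0 < k) (f : C(unitInterval, ℝ)) :
    InSub a k (f - ContinuousMap.const unitInterval (lamPart a k f)) := by
  have : (0 : ℝ) < k := by exact_mod_cast hk
  simp only [InSub, lamPart, ContinuousMap.sub_apply, ContinuousMap.const_apply]
  field_simp
  ring

lemma lamPart_const_add (hk : 0 < k) (c : ℝ) {g : C(unitInterval, ℝ)} (hg : InSub a k g) :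
    lamPart a k (ContinuousMap.const unitInterval c + g) = c := by
  have : (0 : ℝ) < k := by exact_mod_cast hk
  simp only [InSub] at hg
  simp only [lamPart, ContinuousMap.add_apply, ContinuousMap.const_apply, hg]
  field_simp
  ring

end InSub

theorem posExt_iff {a k : ℕ} (hk : 0 < k) {φ : C(unitInterval, ℝ) → C(unitInterval, ℝ)} :
    PosExt a k φ ↔ ∀ g, InSub a k g → ∀ c : ℝ, (∀ z, 0 ≤ c + g z) → ∀ x, 0 ≤ c + φ g x := by
  constructor
  · intro h g hg c hcg x
    have hf : ∀ z, 0 ≤ (ContinuousMap.const unitInterval c + g) z := hcg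
    have := h _ hf x
    rwa [lamPart_const_add hk c hg, add_sub_cancel_left] at this
  · intro h f hf x
    refine h _ (inSub_sub_const_lamPart hk f) _ (fun z => ?_) x
    simpa using hf z

lemma nonneg_of_forall_pos_neg_mul_le {c M : ℝ} (h : ∀ ε > 0, -(ε * M) ≤ c) : 0 ≤ c := by
  have hlim : Tendsto (fun ε : ℝ => -(ε * M)) (𝓝[>] 0) (𝓝 0) := by
    have : Tendsto (fun ε : ℝ => -(ε * M)) (𝓝 0) (𝓝 (-(0 * M))) :=
      ((continuous_id.mul continuous_const).neg).tendsto 0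
    simpa using this.mono_left nhdsWithin_le_nhds
  exact le_of_tendsto hlim (eventually_nhdsWithin_of_forall h)

/-- `φ(g + c t + ε u) ≥ 0` with `u ≥ 1` gives `c + φ(g) ≥ c φ(t) + φ(g) ≥ -ε φ(u)`. -/
lemma IsPositiveOnSub.nonneg_add_of_approx {a k : ℕ} {φ : C(unitInterval, ℝ) → C(unitInterval, ℝ)}
    (hφ : IsPositiveOnSub a k φ) {u : C(unitInterval, ℝ)} (hu : InSub a k u) (hu1 : ∀ z, 1 ≤ u z)
    {g : C(unitInterval, ℝ)} (hg : InSub a k g) {c : ℝ} (x : unitInterval)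
    (happrox : ∀ ε > 0, ∃ t, InSub a k t ∧ c * φ t x ≤ c ∧ ∀ z, -ε ≤ g z + c * t z) :
    0 ≤ c + φ g x := by
  refine nonneg_of_forall_pos_neg_mul_le (M := φ u x) fun ε hε => ?_
  obtain ⟨t, ht, hct, hgt⟩ := happrox ε hε
  have hsum : InSub a k (g + c • t + ε • u) := (hg.add (ht.smul c)).add (hu.smul ε)
  have hnn : ∀ z, 0 ≤ (g + c • t + ε • u) z := fun z => by
    have := mul_le_mul_of_nonneg_left (hu1 z) hε.le
    simp only [ContinuousMap.add_apply, ContinuousMap.smul_apply, smul_eq_mul]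
    linarith [hgt z]
  have hφsum := hφ.nonneg _ hsum hnn x
  rw [hφ.map_add _ _ (hg.add (ht.smul c)) (hu.smul ε), hφ.map_add _ _ hg (ht.smul c),
    hφ.map_smul _ _ ht, hφ.map_smul _ _ hu] at hφsum
  simp only [ContinuousMap.add_apply, ContinuousMap.smul_apply, smul_eq_mul] at hφsum
  linarith

noncomputable def lowerRamp (a k : ℕ) (δ : ℝ) : C(unitInterval, ℝ) :=
  ⟨fun x => (a : ℝ) / ((a : ℝ) + (k : ℝ)) + (k : ℝ) / ((a : ℝ) + (k : ℝ)) * min ((x : ℝ) / δ) 1,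
    by fun_prop⟩

noncomputable def upperRamp (a k : ℕ) (σ : ℝ) : C(unitInterval, ℝ) :=
  ⟨fun x => 1 + (k : ℝ) / (a : ℝ) * max (((x : ℝ) - (1 - σ)) / σ) 0, by fun_prop⟩

section TestFunctions

variable {a k : ℕ}

lemma lowerRamp_apply (δ : ℝ) (x : unitInterval) :
    lowerRamp a k δ x =
      (a : ℝ) / ((a : ℝ) + (k : ℝ)) + (k : ℝ) / ((a : ℝ) + (k : ℝ)) * min ((x : ℝ) / δ) 1 :=
  rfl

lemma upperRamp_apply (σ : ℝ) (x : unitInterval) :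
    upperRamp a k σ x = 1 + (k : ℝ) / (a : ℝ) * max (((x : ℝ) - (1 - σ)) / σ) 0 :=
  rfl

lemma lowerRamp_eq_one (hk : 0 < k) {δ : ℝ} (hδ : 0 < δ) {x : unitInterval} (hx : δ ≤ x) :
    lowerRamp a k δ x = 1 := by
  have : (0 : ℝ) < a + k := by positivity
  rw [lowerRamp_apply, min_eq_right ((one_le_div hδ).mpr hx)]
  field_simp

lemma upperRamp_eq_one {σ : ℝ} (hσ : 0 < σ) {x : unitInterval} (hx : (x : ℝ) ≤ 1 - σ) :
    upperRamp a k σ x = 1 := by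
  rw [upperRamp_apply, max_eq_right (div_nonpos_of_nonpos_of_nonneg (by linarith) hσ.le)]
  ring

lemma isLowerTest_lowerRamp (hk : 0 < k) {δ : ℝ} (hδ0 : 0 < δ) (hδ1 : δ ≤ 1) :
    IsLowerTest a k (lowerRamp a k δ) := by
  have hak : (0 : ℝ) < a + k := by positivity
  have h0 : lowerRamp a k δ 0 = a / (a + k) := by simp [lowerRamp_apply]
  have h1 : lowerRamp a k δ 1 = 1 := lowerRamp_eq_one hk hδ0 (by simpa using hδ1)
  refine ⟨by rw [InSub, h0, h1, mul_one], h0, fun x => ?_, δ, hδ0, hδ1,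
    fun x hx => lowerRamp_eq_one hk hδ0 hx⟩
  have hm0 : 0 ≤ min ((x : ℝ) / δ) 1 := le_min (div_nonneg x.2.1 hδ0.le) zero_le_one
  have hm1 : min ((x : ℝ) / δ) 1 ≤ 1 := min_le_right _ _
  have hsum : (a : ℝ) / (a + k) + k / (a + k) = 1 := by field_simp
  have hk' : 0 ≤ (k : ℝ) / (a + k) := by positivity
  rw [lowerRamp_apply]
  constructor <;> nlinarith

lemma isUpperTest_upperRamp (ha : 0 < a) {σ : ℝ} (hσ0 : 0 < σ) (hσ1 : σ < 1) :
    IsUpperTest a k (upperRamp a k σ) := by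
  have ha' : (0 : ℝ) < a := by exact_mod_cast ha
  have h0 : upperRamp a k σ 0 = 1 := upperRamp_eq_one hσ0 (by simp; linarith)
  have h1 : upperRamp a k σ 1 = (a + k) / a := by
    rw [upperRamp_apply, show ((1 : unitInterval) : ℝ) - (1 - σ) = σ by simp,
      div_self hσ0.ne', max_eq_left zero_le_one]
    field_simp
  refine ⟨by rw [InSub, h0, h1]; field_simp, h1, fun x => ?_, σ, hσ0.le, hσ1,
    fun x hx => upperRamp_eq_one hσ0 hx⟩
  have hm0 : 0 ≤ max (((x : ℝ) - (1 - σ)) / σ) 0 := le_max_right _ _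
  have hm1 : max (((x : ℝ) - (1 - σ)) / σ) 0 ≤ 1 :=
    max_le ((div_le_one hσ0).mpr (by linarith [x.2.2])) zero_le_one
  have hsum : ((a : ℝ) + k) / a = 1 + k / a := by field_simp
  have hk' : 0 ≤ (k : ℝ) / a := by positivity
  rw [upperRamp_apply, hsum]
  constructor <;> nlinarith

end TestFunctions

lemma ContinuousMap.exists_near_zero_sub_lt_apply (f : C(unitInterval, ℝ)) {ε : ℝ}
    (hε : 0 < ε) : ∃ δ : ℝ, 0 < δ ∧ δ ≤ 1 ∧ ∀ z : unitInterval, (z : ℝ) < δ → f 0 - ε < f z := by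
  obtain ⟨r, hr, hfr⟩ := Metric.eventually_nhds_iff.mp
    ((f.continuous.tendsto 0).eventually (lt_mem_nhds (sub_lt_self (f 0) hε)))
  refine ⟨min r 1, lt_min hr one_pos, min_le_right _ _, fun z hz => hfr ?_⟩
  rw [Subtype.dist_eq, Real.dist_eq, Set.Icc.coe_zero, sub_zero, abs_of_nonneg z.2.1]
  exact hz.trans_le (min_le_left _ _)

lemma ContinuousMap.exists_near_one_sub_lt_apply (f : C(unitInterval, ℝ)) {ε : ℝ}
    (hε : 0 < ε) :
    ∃ σ : ℝ, 0 < σ ∧ σ < 1 ∧ ∀ z : unitInterval, 1 - σ < (z : ℝ) → f 1 - ε < f z := by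
  obtain ⟨r, hr, hfr⟩ := Metric.eventually_nhds_iff.mp
    ((f.continuous.tendsto 1).eventually (lt_mem_nhds (sub_lt_self (f 1) hε)))
  refine ⟨min r (1 / 2), lt_min hr one_half_pos, (min_le_right _ _).trans_lt one_half_lt_one,
    fun z hz => hfr ?_⟩
  rw [Subtype.dist_eq, Real.dist_eq, Set.Icc.coe_one, abs_of_nonpos (by linarith [z.2.2])]
  linarith [min_le_left r (1 / 2)]

lemma exists_isLowerTest_add_mul_ge {a k : ℕ} (hk : 0 < k) {g : C(unitInterval, ℝ)}
    (hg : InSub a k g) {c : ℝ} (hc : 0 ≤ c) (hcg : ∀ z, 0 ≤ c + g z) {ε : ℝ} (hε : 0 < ε) :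
    ∃ e, IsLowerTest a k e ∧ ∀ z, -ε ≤ g z + c * e z := by
  obtain ⟨δ, hδ0, hδ1, hgδ⟩ := g.exists_near_zero_sub_lt_apply hε
  have he := isLowerTest_lowerRamp (a := a) hk hδ0 hδ1
  refine ⟨lowerRamp a k δ, he, fun z => ?_⟩
  rcases le_or_gt δ z with hz | hz
  · rw [lowerRamp_eq_one hk hδ0 hz]
    linarith [hcg z]
  · have hq : 0 ≤ (a : ℝ) / (a + k) := by positivity
    have hce := mul_le_mul_of_nonneg_left (he.2.2.1 z).1 hc
    have := mul_nonneg hq (hcg 1)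
    rw [InSub] at hg
    nlinarith [hgδ z hz]

lemma exists_isUpperTest_add_mul_ge {a k : ℕ} (ha : 0 < a) {g : C(unitInterval, ℝ)}
    (hg : InSub a k g) {c : ℝ} (hc : c ≤ 0) (hcg : ∀ z, 0 ≤ c + g z) {ε : ℝ} (hε : 0 < ε) :
    ∃ γ, IsUpperTest a k γ ∧ ∀ z, -ε ≤ g z + c * γ z := by
  obtain ⟨σ, hσ0, hσ1, hgσ⟩ := g.exists_near_one_sub_lt_apply hε
  have hγ := isUpperTest_upperRamp (k := k) ha hσ0 hσ1
  refine ⟨upperRamp a k σ, hγ, fun z => ?_⟩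
  rcases le_or_gt (z : ℝ) (1 - σ) with hz | hz
  · rw [upperRamp_eq_one hσ0 hz]
    linarith [hcg z]
  · have ha' : (0 : ℝ) < a := by exact_mod_cast ha
    have hg1 : g 1 = (a + k) / a * g 0 := by
      rw [InSub] at hg
      rw [hg]; field_simp
    have hq : 0 ≤ ((a : ℝ) + k) / a := by positivity
    have hcγ := mul_le_mul_of_nonpos_left (hγ.2.2.1 z).2 hc
    have := mul_nonneg hq (hcg 0)
    nlinarith [hgσ z hz]

theorem stmt2 (a k : ℕ) (ha : 0 < a) (hk : 0 < k)
    (φ : C(unitInterval, ℝ) → C(unitInterval, ℝ))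
    (hadd : ∀ f g : C(unitInterval, ℝ), InSub a k f → InSub a k g → φ (f + g) = φ f + φ g)
    (hsmul : ∀ (c : ℝ) (f : C(unitInterval, ℝ)), InSub a k f → φ (c • f) = c • φ f)
    (hpos : ∀ f : C(unitInterval, ℝ), InSub a k f → (∀ x, 0 ≤ f x) → ∀ x, 0 ≤ φ f x) :
    PosExt a k φ ↔
      ((∀ γ : C(unitInterval, ℝ), IsUpperTest a k γ → ∀ y, 1 ≤ φ γ y) ∧
       (∀ e : C(unitInterval, ℝ), IsLowerTest a k e → ∀ y, φ e y ≤ 1)) := by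
  have hφ : IsPositiveOnSub a k φ := ⟨hadd, hsmul, hpos⟩
  rw [posExt_iff hk]
  constructor
  · intro hext
    refine ⟨fun γ hγ y => ?_, fun e he y => ?_⟩
    · have := hext γ hγ.1 (-1) (fun z => by linarith [(hγ.2.2.1 z).1]) y
      linarith
    · have := hext _ (he.1.smul (-1)) 1 (fun z => by simpa [sub_nonneg] using (he.2.2.1 z).2) y
      simp only [hsmul _ _ he.1, ContinuousMap.smul_apply, smul_eq_mul] at this
      linarith
  · rintro ⟨hupper, hlower⟩ g hg c hcg x
    have hu := isUpperTest_upperRamp (k := k) ha one_half_pos one_half_lt_one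
    refine hφ.nonneg_add_of_approx hu.1 (fun z => (hu.2.2.1 z).1) hg x fun ε hε => ?_
    rcases le_or_gt 0 c with hc | hc
    · obtain ⟨e, he, hge⟩ := exists_isLowerTest_add_mul_ge hk hg hc hcg hε
      exact ⟨e, he.1, mul_le_of_le_one_right hc (hlower e he x), hge⟩
    · obtain ⟨γ, hγ, hgγ⟩ := exists_isUpperTest_add_mul_ge ha hg hc.le hcg hε
      exact ⟨γ, hγ.1, mul_le_of_one_le_right hc.le (hupper γ hγ x), hgγ⟩
end

section
/- Let φ be a unital positive linear map on C[0,1] such that φ(C[0,1]_{(a,k)}) ⊆ C[0,1]_{(a,k)}. Then the Borel probability measures μ₀ and μ₁ on [0,1] induced by f ↦ φ(f)(0) and f ↦ φ(f)(1) are the point masses at 0 and 1 respectively; equivalently, φ(f)(0) = f(0) and φ(f)(1) = f(1) for all f ∈ C[0,1]. -/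
open ContinuousMap

noncomputable def iotaMap : C(unitInterval, ℝ) :=
  ⟨fun x => (x : ℝ), continuous_subtype_val⟩

lemma key_lemma (L : C(unitInterval, ℝ) →ₗ[ℝ] ℝ) (hL1 : L 1 = 1)
    (hLpos : ∀ f : C(unitInterval, ℝ), (∀ x, 0 ≤ f x) → 0 ≤ L f)
    (ρ : C(unitInterval, ℝ)) (hρ : ∀ x, 0 ≤ ρ x) (p : unitInterval)
    (hρp : ∀ x, x ≠ p → 0 < ρ x) (hLρ : L ρ = 0)
    (g : C(unitInterval, ℝ)) : L g = g p := by
  have mono : ∀ u v : C(unitInterval, ℝ), (∀ x, u x ≤ v x) → L u ≤ L v := by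
    intro u v h
    have h0 := hLpos (v - u) (fun x => by
      simpa using sub_nonneg.mpr (h x))
    rw [map_sub] at h0
    linarith
  -- First handle the case g p = 0
  have key0 : ∀ g : C(unitInterval, ℝ), g p = 0 → L g = 0 := by
    intro g hgp
    have habs : ∀ ε : ℝ, 0 < ε → |L g| ≤ ε := by
      intro ε hε
      -- produce C ≥ 0 with |g x| ≤ ε + C * ρ x for all x
      obtain ⟨C, hC, hbound⟩ : ∃ C : ℝ, 0 ≤ C ∧ ∀ x, |g x| ≤ ε + C * ρ x := by
        set K : Set unitInterval := {x | ε ≤ |g x|} with hK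
        by_cases hne : K.Nonempty
        · have hKc : IsCompact K := by
            have : IsClosed K :=
              isClosed_le continuous_const (continuous_abs.comp g.continuous)
            exact this.isCompact
          obtain ⟨x₀, hx₀K, hmin⟩ := hKc.exists_isMinOn hne ρ.continuous.continuousOn
          have hx₀p : x₀ ≠ p := by
            intro h
            have : ε ≤ |g x₀| := hx₀K
            rw [h, hgp] at this
            simp at this; linarith
          have hδ : 0 < ρ x₀ := hρp x₀ hx₀p
          refine ⟨‖g‖ / ρ x₀, by positivity, fun x => ?_⟩
          by_cases hx : ε ≤ |g x|
          · have hxK : x ∈ K := hx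
            have h1 : ρ x₀ ≤ ρ x := hmin hxK
            have h2 : |g x| ≤ ‖g‖ := by
              calc |g x| = ‖g x‖ := rfl
                _ ≤ ‖g‖ := g.norm_coe_le_norm x
            have h3 : ‖g‖ ≤ ‖g‖ / ρ x₀ * ρ x := by
              rw [div_mul_eq_mul_div, le_div_iff₀ hδ]
              have : 0 ≤ ‖g‖ := norm_nonneg g
              nlinarith
            linarith
          · push_neg at hx
            have : 0 ≤ ‖g‖ / ρ x₀ * ρ x :=
              mul_nonneg (div_nonneg (norm_nonneg g) hδ.le) (hρ x)
            linarith
        · refine ⟨0, le_refl _, fun x => ?_⟩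
          have : x ∉ K := fun h => hne ⟨x, h⟩
          simp only [hK, Set.mem_setOf_eq, not_le] at this
          linarith
      have hLub : L (ε • (1 : C(unitInterval, ℝ)) + C • ρ) = ε := by
        rw [map_add, map_smul, map_smul, hL1, hLρ]
        simp
      have h1 : L g ≤ ε := by
        have := mono g (ε • (1 : C(unitInterval, ℝ)) + C • ρ) (fun x => by
          have hb := hbound x
          have := abs_le.mp hb |>.2
          simp only [ContinuousMap.add_apply, ContinuousMap.smul_apply,
            ContinuousMap.one_apply, smul_eq_mul, mul_one]
          linarith)
        rwa [hLub] at this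
      have h2 : -(L g) ≤ ε := by
        have := mono (-g) (ε • (1 : C(unitInterval, ℝ)) + C • ρ) (fun x => by
          have hb := hbound x
          have := abs_le.mp hb |>.1
          simp only [ContinuousMap.add_apply, ContinuousMap.smul_apply,
            ContinuousMap.one_apply, ContinuousMap.neg_apply, smul_eq_mul, mul_one]
          linarith)
        rw [map_neg, hLub] at this
        linarith
      exact abs_le.mpr ⟨by linarith, h1⟩
    by_contra h
    have hpos' : 0 < |L g| := abs_pos.mpr h
    have := habs (|L g| / 2) (by linarith)
    linarith
  have := key0 (g - g p • (1 : C(unitInterval, ℝ))) (by simp)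
  rw [map_sub, map_smul, hL1] at this
  simp at this
  linarith

theorem stmt4 (a k : ℕ) (ha : 0 < a) (hk : 0 < k)
    (φ : C(unitInterval, ℝ) →ₗ[ℝ] C(unitInterval, ℝ))
    (hunital : φ 1 = 1)
    (hpos : ∀ f : C(unitInterval, ℝ), (∀ x, 0 ≤ f x) → ∀ x, 0 ≤ φ f x)
    (hsub : ∀ f : C(unitInterval, ℝ),
      f 0 = (a : ℝ) / ((a : ℝ) + (k : ℝ)) * f 1 →
      φ f 0 = (a : ℝ) / ((a : ℝ) + (k : ℝ)) * φ f 1) :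
    ∀ f : C(unitInterval, ℝ), φ f 0 = f 0 ∧ φ f 1 = f 1 := by
  set t : ℝ := (a : ℝ) / ((a : ℝ) + (k : ℝ)) with ht
  have hapos : (0 : ℝ) < a := by exact_mod_cast ha
  have hkpos : (0 : ℝ) < k := by exact_mod_cast hk
  have ht0 : 0 < t := by positivity
  have ht1 : t < 1 := by
    rw [ht, div_lt_one (by linarith)]; linarith
  -- the two evaluation functionals
  let L : C(unitInterval, ℝ) →ₗ[ℝ] ℝ :=
    { toFun := fun g => φ g 1
      map_add' := by intro u v; simp
      map_smul' := by intro c u; simp }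
  let M : C(unitInterval, ℝ) →ₗ[ℝ] ℝ :=
    { toFun := fun g => φ g 0
      map_add' := by intro u v; simp
      map_smul' := by intro c u; simp }
  have hL1 : L 1 = 1 := by simp [L, hunital]
  have hM1 : M 1 = 1 := by simp [M, hunital]
  have hLpos : ∀ f : C(unitInterval, ℝ), (∀ x, 0 ≤ f x) → 0 ≤ L f :=
    fun f hf => hpos f hf 1
  have hMpos : ∀ f : C(unitInterval, ℝ), (∀ x, 0 ≤ f x) → 0 ≤ M f :=
    fun f hf => hpos f hf 0
  have monoL : ∀ u v : C(unitInterval, ℝ), (∀ x, u x ≤ v x) → L u ≤ L v := by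
    intro u v h
    have h0 := hLpos (v - u) (fun x => by simpa using sub_nonneg.mpr (h x))
    rw [map_sub] at h0; linarith
  have monoM : ∀ u v : C(unitInterval, ℝ), (∀ x, u x ≤ v x) → M u ≤ M v := by
    intro u v h
    have h0 := hMpos (v - u) (fun x => by simpa using sub_nonneg.mpr (h x))
    rw [map_sub] at h0; linarith
  -- facts about iota
  have hiota0 : iotaMap 0 = 0 := by simp [iotaMap]
  have hiota1 : iotaMap 1 = 1 := by simp [iotaMap]
  have hiota_mem : ∀ x : unitInterval, 0 ≤ iotaMap x ∧ iotaMap x ≤ 1 :=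
    fun x => ⟨x.2.1, x.2.2⟩
  -- the special function
  set f : C(unitInterval, ℝ) := t • (1 : C(unitInterval, ℝ)) + (1 - t) • iotaMap with hf
  have hfval : ∀ x : unitInterval, f x = t + (1 - t) * (x : ℝ) := by
    intro x
    simp [hf, iotaMap]
  have hf0 : f 0 = t := by rw [hfval]; simp
  have hf1 : f 1 = 1 := by rw [hfval]; simp
  have hMf : M f = t * L f := by
    have := hsub f (by rw [hf0, hf1]; ring)
    simpa [L, M, ht] using this
  have hLf_le : L f ≤ 1 := by
    have := monoL f 1 (fun x => by
      rw [hfval]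
      have h1 : (x : ℝ) ≤ 1 := x.2.2
      simp only [ContinuousMap.one_apply]
      nlinarith)
    rwa [hL1] at this
  have hMf_ge : t ≤ M f := by
    have := monoM (t • (1 : C(unitInterval, ℝ))) f (fun x => by
      rw [hfval]
      have h0 : (0 : ℝ) ≤ (x : ℝ) := x.2.1
      simp only [ContinuousMap.smul_apply, ContinuousMap.one_apply, smul_eq_mul, mul_one]
      nlinarith)
    rw [map_smul, hM1] at this
    simpa using this
  have hLf : L f = 1 := by
    have h1 : t ≤ t * L f := by rw [← hMf]; exact hMf_ge
    have h2 : 1 ≤ L f := by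
      by_contra h
      push_neg at h
      nlinarith
    linarith
  have hMf' : M f = t := by rw [hMf, hLf, mul_one]
  -- L (1 - iota) = 0
  have hdecomp1 : (1 : C(unitInterval, ℝ)) - f = (1 - t) • ((1 : C(unitInterval, ℝ)) - iotaMap) := by
    ext x
    simp [hf, iotaMap]
    ring
  have hL1iota : L ((1 : C(unitInterval, ℝ)) - iotaMap) = 0 := by
    have h1 : L ((1 : C(unitInterval, ℝ)) - f) = 0 := by
      rw [map_sub, hL1, hLf]; ring
    rw [hdecomp1, map_smul, smul_eq_mul] at h1
    have : (1 : ℝ) - t ≠ 0 := by linarith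
    exact (mul_eq_zero.mp h1).resolve_left this
  -- M iota = 0
  have hdecomp2 : f - t • (1 : C(unitInterval, ℝ)) = (1 - t) • iotaMap := by
    ext x
    simp [hf, iotaMap]
  have hMiota : M iotaMap = 0 := by
    have h1 : M (f - t • (1 : C(unitInterval, ℝ))) = 0 := by
      rw [map_sub, map_smul, hM1, hMf']; simp
    rw [hdecomp2, map_smul, smul_eq_mul] at h1
    have : (1 : ℝ) - t ≠ 0 := by linarith
    exact (mul_eq_zero.mp h1).resolve_left this
  -- apply the key lemma
  intro g
  constructor
  · exact key_lemma M hM1 hMpos iotaMap (fun x => x.2.1) 0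
      (fun x hx => by
        have h0 : (0 : ℝ) ≤ (x : ℝ) := x.2.1
        have hne : (x : ℝ) ≠ 0 := by
          intro h
          exact hx (Subtype.ext (by simpa using h))
        simp only [iotaMap, ContinuousMap.coe_mk]
        exact lt_of_le_of_ne h0 (Ne.symm hne))
      hMiota g
  · exact key_lemma L hL1 hLpos ((1 : C(unitInterval, ℝ)) - iotaMap)
      (fun x => by
        have h1 : (x : ℝ) ≤ 1 := x.2.2
        simp [iotaMap]
        linarith) 1
      (fun x hx => by
        have h1 : (x : ℝ) ≤ 1 := x.2.2
        have hne : (x : ℝ) ≠ 1 := by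
          intro h
          exact hx (Subtype.ext (by simpa using h))
        simp only [iotaMap, ContinuousMap.sub_apply, ContinuousMap.one_apply,
          ContinuousMap.coe_mk]
        have := lt_of_le_of_ne h1 hne
        linarith)
      hL1iota g
end

section
/- If λ : [0,1] → [0,1] is continuous and the composition map f ↦ f∘λ sends C[0,1]_{(a,k)} into C[0,1]_{(a,k)}, then λ(0) = 0 and λ(1) = 1. -/
open ContinuousMap

theorem stmt5 (a k : ℕ) (ha : 0 < a) (hk : 0 < k)
    (lam : C(unitInterval, unitInterval))
    (hlam : ∀ f : C(unitInterval, ℝ),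
      f 0 = (a : ℝ) / ((a : ℝ) + (k : ℝ)) * f 1 →
      (f.comp lam) 0 = (a : ℝ) / ((a : ℝ) + (k : ℝ)) * (f.comp lam) 1) :
    lam 0 = 0 ∧ lam 1 = 1 := by
  set c : ℝ := (a : ℝ) / ((a : ℝ) + (k : ℝ)) with hc
  have hapk : (0:ℝ) < (a : ℝ) + (k : ℝ) := by positivity
  have hc0 : 0 < c := by
    apply div_pos _ hapk
    exact_mod_cast ha
  have hc1 : c < 1 := by
    rw [hc, div_lt_one hapk]
    have : (0:ℝ) < (k:ℝ) := by exact_mod_cast hk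
    linarith
  set f : C(unitInterval, ℝ) := ⟨fun x => (1 - c) * (x : ℝ) + c, by continuity⟩ with hf
  have hf0 : f 0 = c * f 1 := by
    show (1 - c) * ((0:unitInterval) : ℝ) + c = c * ((1 - c) * ((1:unitInterval) : ℝ) + c)
    norm_num
  have key := hlam f hf0
  simp only [ContinuousMap.comp_apply, hf, ContinuousMap.coe_mk] at key
  -- key : (1-c) * (lam 0) + c = c * ((1-c) * (lam 1) + c)
  have h0le : (0:ℝ) ≤ (lam 0 : ℝ) := (lam 0).2.1
  have h1le : ((lam 1 : unitInterval) : ℝ) ≤ 1 := (lam 1).2.2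
  have hl0 : ((lam 0 : unitInterval) : ℝ) = c * (((lam 1 : unitInterval) : ℝ) - 1) := by
    have h1c : (1 - c) ≠ 0 := by linarith
    have hexp : (1 - c) * ((lam 0 : unitInterval) : ℝ)
        = (1 - c) * (c * (((lam 1 : unitInterval) : ℝ) - 1)) := by
      linear_combination key
    exact mul_left_cancel₀ h1c hexp
  have hl0z : ((lam 0 : unitInterval) : ℝ) = 0 := by
    have : c * (((lam 1 : unitInterval) : ℝ) - 1) ≤ 0 := by nlinarith
    linarith [hl0, h0le, this]
  have hl1 : ((lam 1 : unitInterval) : ℝ) = 1 := by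
    rw [hl0z] at hl0
    have := hl0.symm
    have hne : c ≠ 0 := ne_of_gt hc0
    nlinarith
  constructor
  · exact Subtype.ext (by simpa using hl0z)
  · exact Subtype.ext (by simpa using hl1)
end

section
/- Let λ₁, λ₂ : [0,1] → [0,1] be continuous with λ₁(0)=0, λ₁(1)=1, λ₂(0)=1, λ₂(1)=0 and let k₁ > k₂ ≥ 0 be real numbers. Define T : C[0,1] → C[0,1] by T(f) = (k₁ f∘λ₁ + k₂ f∘λ₂)/(k₁+k₂). Then T is a unital positive linear map, and T sends C[0,1]_{(a,k)} into C[0,1]_{(b,k)}, where b = (k₁a + k₂a + k₂k)/(k₁ − k₂). -/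
open ContinuousMap

section WeightedComposition

variable {X Y : Type*} [TopologicalSpace X] [TopologicalSpace Y]
  {T : C(Y, ℝ) → C(X, ℝ)} {l₁ l₂ : C(X, Y)} {k₁ k₂ : ℝ}

theorem map_add_of_weighted_comp
    (hT : ∀ f x, T f x = (k₁ * f (l₁ x) + k₂ * f (l₂ x)) / (k₁ + k₂)) (f g : C(Y, ℝ)) :
    T (f + g) = T f + T g := by
  ext x
  simp only [hT, ContinuousMap.add_apply]
  ring

theorem map_smul_of_weighted_comp
    (hT : ∀ f x, T f x = (k₁ * f (l₁ x) + k₂ * f (l₂ x)) / (k₁ + k₂)) (c : ℝ) (f : C(Y, ℝ)) :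
    T (c • f) = c • T f := by
  ext x
  simp only [hT, ContinuousMap.smul_apply, smul_eq_mul]
  ring

theorem map_one_of_weighted_comp
    (hT : ∀ f x, T f x = (k₁ * f (l₁ x) + k₂ * f (l₂ x)) / (k₁ + k₂)) (hk : k₁ + k₂ ≠ 0) :
    T 1 = 1 := by
  ext x
  simp only [hT, one_apply, mul_one, div_self hk]

theorem apply_nonneg_of_weighted_comp
    (hT : ∀ f x, T f x = (k₁ * f (l₁ x) + k₂ * f (l₂ x)) / (k₁ + k₂))
    (hk₁ : 0 ≤ k₁) (hk₂ : 0 ≤ k₂) {f : C(Y, ℝ)} (hf : ∀ y, 0 ≤ f y) (x : X) :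
    0 ≤ T f x := by
  rw [hT]
  have := hf (l₁ x)
  have := hf (l₂ x)
  positivity

end WeightedComposition

/-- After clearing denominators, `b + k` and `k₁ + k₂ a / (a + k)` are both multiples of
`k₁ (a + k) + k₂ a`, which then cancels. -/
theorem boundary_ratio_transfer {a k k₁ k₂ b : ℝ} (ha : 0 ≤ a) (hak : 0 < a + k)
    (hk₂ : 0 ≤ k₂) (hk₁₂ : k₂ < k₁) (hb : b = (k₁ * a + k₂ * a + k₂ * k) / (k₁ - k₂)) :
    k₁ * (a / (a + k)) + k₂ = b / (b + k) * (k₁ + k₂ * (a / (a + k))) := by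
  have hd : 0 < k₁ - k₂ := sub_pos.mpr hk₁₂
  have hD : 0 < k₁ * (a + k) + k₂ * a := by nlinarith
  have hbk : b + k = (k₁ * (a + k) + k₂ * a) / (k₁ - k₂) := by
    rw [hb]
    field_simp
    ring
  rw [hbk, hb, div_div_div_cancel_right₀ hd.ne', div_mul_eq_mul_div, eq_div_iff hD.ne']
  field_simp
  ring

theorem stmt7_general (a k : ℕ) (hk : 0 < k)
    (l₁ l₂ : C(unitInterval, unitInterval))
    (hl₁0 : l₁ 0 = 0) (hl₁1 : l₁ 1 = 1) (hl₂0 : l₂ 0 = 1) (hl₂1 : l₂ 1 = 0)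
    (k₁ k₂ : ℝ) (hk₂ : 0 ≤ k₂) (hk₁₂ : k₂ < k₁)
    (b : ℝ) (hb : b = (k₁ * a + k₂ * a + k₂ * k) / (k₁ - k₂))
    (T : C(unitInterval, ℝ) → C(unitInterval, ℝ))
    (hT : ∀ (f : C(unitInterval, ℝ)) (x : unitInterval),
      T f x = (k₁ * f (l₁ x) + k₂ * f (l₂ x)) / (k₁ + k₂)) :
    (∀ f g : C(unitInterval, ℝ), T (f + g) = T f + T g) ∧
    (∀ (c : ℝ) (f : C(unitInterval, ℝ)), T (c • f) = c • T f) ∧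
    T 1 = 1 ∧
    (∀ f : C(unitInterval, ℝ), (∀ x, 0 ≤ f x) → ∀ x, 0 ≤ T f x) ∧
    (∀ f : C(unitInterval, ℝ),
      f 0 = (a : ℝ) / ((a : ℝ) + (k : ℝ)) * f 1 →
      T f 0 = b / (b + (k : ℝ)) * T f 1) := by
  have hk₁ : 0 < k₁ := hk₂.trans_lt hk₁₂
  refine ⟨map_add_of_weighted_comp hT, map_smul_of_weighted_comp hT,
    map_one_of_weighted_comp hT (by positivity),
    fun f hf => apply_nonneg_of_weighted_comp hT hk₁.le hk₂ hf, fun f hf => ?_⟩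
  have hratio := boundary_ratio_transfer (Nat.cast_nonneg a)
    (by positivity : (0 : ℝ) < a + k) hk₂ hk₁₂ hb
  rw [hT, hT, hl₁0, hl₁1, hl₂0, hl₂1, hf]
  linear_combination f 1 / (k₁ + k₂) * hratio

theorem stmt7 (a k : ℕ) (ha : 0 < a) (hk : 0 < k)
    (l₁ l₂ : C(unitInterval, unitInterval))
    (hl₁0 : l₁ 0 = 0) (hl₁1 : l₁ 1 = 1) (hl₂0 : l₂ 0 = 1) (hl₂1 : l₂ 1 = 0)
    (k₁ k₂ : ℝ) (hk₂ : 0 ≤ k₂) (hk₁₂ : k₂ < k₁)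
    (b : ℝ) (hb : b = (k₁ * a + k₂ * a + k₂ * k) / (k₁ - k₂)) (hb0 : 0 ≤ b)
    (T : C(unitInterval, ℝ) → C(unitInterval, ℝ))
    (hT : ∀ (f : C(unitInterval, ℝ)) (x : unitInterval),
      T f x = (k₁ * f (l₁ x) + k₂ * f (l₂ x)) / (k₁ + k₂)) :
    (∀ f g : C(unitInterval, ℝ), T (f + g) = T f + T g) ∧
    (∀ (c : ℝ) (f : C(unitInterval, ℝ)), T (c • f) = c • T f) ∧
    T 1 = 1 ∧
    (∀ f : C(unitInterval, ℝ), (∀ x, 0 ≤ f x) → ∀ x, 0 ≤ T f x) ∧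
    (∀ f : C(unitInterval, ℝ),
      f 0 = (a : ℝ) / ((a : ℝ) + (k : ℝ)) * f 1 →
      T f 0 = b / (b + (k : ℝ)) * T f 1) :=
  stmt7_general a k hk l₁ l₂ hl₁0 hl₁1 hl₂0 hl₂1 k₁ k₂ hk₂ hk₁₂ b hb T hT
end

section
/- Let φ be a unital positive linear map on C[0,1] sending C[0,1]_{(a,k)} into C[0,1]_{(b,k)}, and let μ₀, μ₁ be the Borel probability measures with φ(f)(0) = ∫f dμ₀, φ(f)(1) = ∫f dμ₁. Let {X₁,…,Xₙ} be a partition of [0,1] into connected Borel sets with 0 ∈ X₁ and 1 ∈ Xₙ. Then μ₀(Xᵢ) = (b/(b+k)) μ₁(Xᵢ) for all i = 2,…,n−1, and (a/(a+k)) μ₀(X₁) + μ₀(Xₙ) = (b/(b+k)) ((a/(a+k)) μ₁(X₁) + μ₁(Xₙ)). -/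
/-!
Write `α = a/(a+k)` and `β = b/(b+k)`. The linear functionals `f ↦ f 0 - α f 1` and
`f ↦ φ f 0 - β φ f 1` have nested kernels, so the second is `c` times the first, where evaluating
at `1` gives `c = (1-β)/(1-α)`. In terms of the representing measures this says
`μ₀ + cα δ₁ = β μ₁ + c δ₀`. Evaluating on a piece `Xᵢ` of the partition, the Dirac masses only
see whether `Xᵢ` contains `0` or `1`; for the two end pieces the constant `c` cancels from
`α · (identity on X₁) + (identity on Xₙ)`.
-/

open ContinuousMap MeasureTheory
open scoped NNReal

theorem LinearMap.eq_div_mul_of_ker_le {K V : Type*} [Field K] [AddCommGroup V] [Module K V]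
    {ℓ L : V →ₗ[K] K} (h : LinearMap.ker ℓ ≤ LinearMap.ker L) {e : V} (he : ℓ e ≠ 0) (v : V) :
    L v = L e / ℓ e * ℓ v := by
  have hker : v - (ℓ v / ℓ e) • e ∈ LinearMap.ker ℓ := by
    simp [div_mul_cancel₀ _ he]
  have hL := h hker
  simp only [LinearMap.mem_ker, map_sub, map_smul, smul_eq_mul] at hL
  rw [div_mul_eq_mul_div, eq_div_iff he]
  field_simp at hL
  linear_combination hL

theorem MeasureTheory.measureReal_add_smul_dirac {X : Type*} [MeasurableSpace X]
    [MeasurableSingletonClass X] (μ : Measure X) [IsFiniteMeasure μ] (c : ℝ≥0) (x : X)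
    (s : Set X) : (μ + c • Measure.dirac x).real s = μ.real s + c * s.indicator 1 x := by
  rw [measureReal_add_apply, measureReal_nnreal_smul_apply]
  by_cases hx : x ∈ s <;> simp [Measure.real, hx]

section RepresentingMeasures

variable {X : Type*} [TopologicalSpace X]

theorem ContinuousMap.boundary_functional_eq (φ : C(X, ℝ) →ₗ[ℝ] C(X, ℝ)) (hunital : φ 1 = 1)
    {x₀ x₁ : X} {α β : ℝ} (hα : α ≠ 1)
    (hsub : ∀ f : C(X, ℝ), f x₀ = α * f x₁ → φ f x₀ = β * φ f x₁) (f : C(X, ℝ)) :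
    φ f x₀ - β * φ f x₁ = (1 - β) / (1 - α) * (f x₀ - α * f x₁) := by
  let ℓ : C(X, ℝ) →ₗ[ℝ] ℝ := (evalCLM ℝ x₀ - α • evalCLM ℝ x₁ : C(X, ℝ) →L[ℝ] ℝ)
  let L : C(X, ℝ) →ₗ[ℝ] ℝ := (evalCLM ℝ x₀ - β • evalCLM ℝ x₁ : C(X, ℝ) →L[ℝ] ℝ) ∘ₗ φ
  have hker : LinearMap.ker ℓ ≤ LinearMap.ker L := fun g hg => by
    simp only [LinearMap.mem_ker] at hg ⊢
    simpa [ℓ, L, sub_eq_zero] using hsub g (by simpa [ℓ, sub_eq_zero] using hg)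
  have hℓ1 : ℓ 1 ≠ 0 := by simpa [ℓ, sub_eq_zero] using hα.symm
  simpa [ℓ, L, hunital] using LinearMap.eq_div_mul_of_ker_le hker hℓ1 f

variable [MeasurableSpace X] [HasOuterApproxClosed X] [BorelSpace X]

theorem representingMeasures_add_smul_dirac_eq (φ : C(X, ℝ) →ₗ[ℝ] C(X, ℝ)) (hunital : φ 1 = 1)
    {x₀ x₁ : X} {α β : ℝ≥0} (hα : α < 1) (hβ : β ≤ 1)
    (hsub : ∀ f : C(X, ℝ), f x₀ = α * f x₁ → φ f x₀ = β * φ f x₁)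
    (μ₀ μ₁ : Measure X) [IsFiniteMeasure μ₀] [IsFiniteMeasure μ₁]
    (hμ₀ : ∀ f : C(X, ℝ), φ f x₀ = ∫ t, f t ∂μ₀) (hμ₁ : ∀ f : C(X, ℝ), φ f x₁ = ∫ t, f t ∂μ₁) :
    μ₀ + ((1 - β) / (1 - α) * α) • Measure.dirac x₁ =
      β • μ₁ + ((1 - β) / (1 - α)) • Measure.dirac x₀ := by
  refine ext_of_forall_integral_eq_of_IsFiniteMeasure fun f => ?_
  have key := ContinuousMap.boundary_functional_eq φ hunital (by exact_mod_cast hα.ne) hsub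
    f.toContinuousMap
  rw [hμ₀, hμ₁] at key
  rw [integral_add_measure (f.integrable _) (f.integrable _),
    integral_add_measure (f.integrable _) (f.integrable _),
    integral_smul_nnreal_measure, integral_smul_nnreal_measure, integral_smul_nnreal_measure,
    integral_dirac' _ _ f.continuous.stronglyMeasurable,
    integral_dirac' _ _ f.continuous.stronglyMeasurable]
  simp only [NNReal.smul_def, smul_eq_mul, NNReal.coe_mul, NNReal.coe_div,
    NNReal.coe_sub hβ, NNReal.coe_sub hα.le, NNReal.coe_one]
  linear_combination key

end RepresentingMeasures

theorem stmt8 (a k b : ℕ) (hk : 0 < k)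
    (φ : C(unitInterval, ℝ) →ₗ[ℝ] C(unitInterval, ℝ))
    (hunital : φ 1 = 1)
    (hsub : ∀ f : C(unitInterval, ℝ),
      f 0 = (a : ℝ) / ((a : ℝ) + (k : ℝ)) * f 1 →
      φ f 0 = (b : ℝ) / ((b : ℝ) + (k : ℝ)) * φ f 1)
    (μ₀ μ₁ : Measure unitInterval)
    [IsProbabilityMeasure μ₀] [IsProbabilityMeasure μ₁]
    (hμ₀ : ∀ f : C(unitInterval, ℝ), φ f 0 = ∫ t, f t ∂μ₀)
    (hμ₁ : ∀ f : C(unitInterval, ℝ), φ f 1 = ∫ t, f t ∂μ₁)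
    (n : ℕ) (hn : 2 ≤ n) (X : Fin n → Set unitInterval)
    (hdisj : Pairwise (Function.onFun Disjoint X))
    (h0 : (0 : unitInterval) ∈ X ⟨0, by omega⟩)
    (h1 : (1 : unitInterval) ∈ X ⟨n - 1, by omega⟩) :
    (∀ i : Fin n, 1 ≤ i.val → i.val ≤ n - 2 →
      (μ₀ (X i)).toReal = (b : ℝ) / ((b : ℝ) + (k : ℝ)) * (μ₁ (X i)).toReal) ∧
    (a : ℝ) / ((a : ℝ) + (k : ℝ)) * (μ₀ (X ⟨0, by omega⟩)).toReal +
        (μ₀ (X ⟨n - 1, by omega⟩)).toReal =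
      (b : ℝ) / ((b : ℝ) + (k : ℝ)) *
        ((a : ℝ) / ((a : ℝ) + (k : ℝ)) * (μ₁ (X ⟨0, by omega⟩)).toReal +
          (μ₁ (X ⟨n - 1, by omega⟩)).toReal) := by
  set α : ℝ≥0 := a / (a + k) with hα_def
  set β : ℝ≥0 := b / (b + k) with hβ_def
  have hα : α < 1 := (div_lt_one (by positivity)).2 (lt_add_of_pos_right _ (by exact_mod_cast hk))
  have hβ : β ≤ 1 := div_le_one_of_le₀ le_self_add (by positivity)
  have hαr : (α : ℝ) = a / (a + k) := by simp [hα_def]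
  have hβr : (β : ℝ) = b / (b + k) := by simp [hβ_def]
  have hμ := representingMeasures_add_smul_dirac_eq φ hunital hα hβ (by rwa [hαr, hβr]) μ₀ μ₁
    hμ₀ hμ₁
  set c := (1 - β) / (1 - α)
  have hpiece : ∀ s, μ₀.real s + c * α * s.indicator 1 1 = β * μ₁.real s + c * s.indicator 1 0 :=
    fun s => by
      simpa only [measureReal_add_smul_dirac, measureReal_nnreal_smul_apply, NNReal.coe_mul]
        using congrArg (·.real s) hμ
  have notMem : ∀ {i j : Fin n} {x}, i ≠ j → x ∈ X j → x ∉ X i := fun hij hx hxi =>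
    Set.disjoint_left.mp (hdisj hij) hxi hx
  simp only [← hαr, ← hβr, ← measureReal_def]
  refine ⟨fun i hi1 hi2 => ?_, ?_⟩
  · have hi := hpiece (X i)
    rw [Set.indicator_of_notMem (notMem (by grind) h1),
      Set.indicator_of_notMem (notMem (by grind) h0)] at hi
    simpa using hi
  · have hfirst := hpiece (X ⟨0, by omega⟩)
    have hlast := hpiece (X ⟨n - 1, by omega⟩)
    have hne : (⟨0, by omega⟩ : Fin n) ≠ ⟨n - 1, by omega⟩ := by grind
    rw [Set.indicator_of_notMem (notMem hne h1), Set.indicator_of_mem h0] at hfirst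
    rw [Set.indicator_of_mem h1, Set.indicator_of_notMem (notMem hne.symm h0)] at hlast
    simp only [Pi.one_apply, mul_one, mul_zero, add_zero] at hfirst hlast
    linear_combination (α : ℝ) * hfirst + hlast
end

section
/- Let a, k be positive integers and b ≥ 0 an integer. If there exists a unital positive linear map φ on C[0,1] which sends C[0,1]_{(a,k)} into C[0,1]_{(b,k)}, then b ≥ a. -/
open ContinuousMap

theorem stmt10 (a k : ℕ) (ha : 0 < a) (hk : 0 < k) (b : ℕ)
    (φ : C(unitInterval, ℝ) →ₗ[ℝ] C(unitInterval, ℝ))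
    (hunital : φ 1 = 1)
    (hpos : ∀ f : C(unitInterval, ℝ), (∀ x, 0 ≤ f x) → ∀ x, 0 ≤ φ f x)
    (hsub : ∀ f : C(unitInterval, ℝ),
      f 0 = (a : ℝ) / ((a : ℝ) + (k : ℝ)) * f 1 →
      φ f 0 = (b : ℝ) / ((b : ℝ) + (k : ℝ)) * φ f 1) :
    a ≤ b := by
  by_contra hab
  push_neg at hab
  set α : ℝ := (a : ℝ) / ((a : ℝ) + (k : ℝ)) with hαdef
  set β : ℝ := (b : ℝ) / ((b : ℝ) + (k : ℝ)) with hβdef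
  have hk' : (0 : ℝ) < k := by exact_mod_cast hk
  have ha' : (0 : ℝ) < a := by exact_mod_cast ha
  have hb' : (0 : ℝ) ≤ b := by positivity
  have hab' : (b : ℝ) < a := by exact_mod_cast hab
  have hden_a : (0 : ℝ) < (a : ℝ) + k := by linarith
  have hden_b : (0 : ℝ) < (b : ℝ) + k := by linarith
  have hα0 : 0 < α := div_pos ha' hden_a
  have hα1 : α < 1 := by
    rw [hαdef, div_lt_one hden_a]; linarith
  have hβ0 : 0 ≤ β := div_nonneg hb' hden_b.le
  have hβα : β < α := by
    rw [hβdef, hαdef, div_lt_div_iff₀ hden_b hden_a]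
    nlinarith
  -- the test function f(t) = α + (1-α) t
  set f : C(unitInterval, ℝ) :=
    ⟨fun x => α + (1 - α) * (x : ℝ), continuous_const.add (continuous_const.mul continuous_subtype_val)⟩ with hfdef
  have hf0 : f 0 = α := by simp [hfdef]
  have hf1 : f 1 = 1 := by simp [hfdef]
  have hmem : f 0 = α * f 1 := by rw [hf0, hf1]; ring
  have hφf := hsub f hmem
  -- φ f ≥ α pointwise via positivity applied to f - α • 1
  have hlow : ∀ x, α ≤ φ f x := by
    intro x
    have h1 : ∀ y : unitInterval, 0 ≤ (f - α • (1 : C(unitInterval, ℝ))) y := by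
      intro y
      have hy : (0 : ℝ) ≤ (y : ℝ) := y.2.1
      simp [hfdef]
      nlinarith
    have h2 := hpos _ h1 x
    have h3 : φ (f - α • (1 : C(unitInterval, ℝ))) = φ f - α • (1 : C(unitInterval, ℝ)) := by
      rw [map_sub, map_smul, hunital]
    rw [h3] at h2
    simp at h2
    linarith
  -- φ f ≤ 1 pointwise via positivity applied to 1 - f
  have hhigh : ∀ x, φ f x ≤ 1 := by
    intro x
    have h1 : ∀ y : unitInterval, 0 ≤ ((1 : C(unitInterval, ℝ)) - f) y := by
      intro y
      have hy : (y : ℝ) ≤ 1 := y.2.2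
      simp [hfdef]
      nlinarith
    have h2 := hpos _ h1 x
    have h3 : φ ((1 : C(unitInterval, ℝ)) - f) = (1 : C(unitInterval, ℝ)) - φ f := by
      rw [map_sub, hunital]
    rw [h3] at h2
    simp at h2
    exact h2
  have h0 := hlow 0
  have h1 := hhigh 1
  have h2 : β * φ f 1 ≤ β * 1 := mul_le_mul_of_nonneg_left h1 hβ0
  rw [hφf] at h0
  nlinarith
end

section
/- Let φ be a unital positive linear map on C[0,1] sending C[0,1]_α into C[0,1]_β, with μ₀, μ₁ the Borel probability measures representing the evaluations of φ at 0 and 1. Let {X₁,…,Xₙ} be a partition of [0,1] into connected Borel sets with 0 ∈ X₁, 1 ∈ Xₙ. Then μ₀(Xᵢ) = β μ₁(Xᵢ) for i = 2,…,n−1, and α μ₀(X₁) + μ₀(Xₙ) = β (α μ₁(X₁) + μ₁(Xₙ)). -/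
/-!
The signed measure `μ₀ - β • μ₁` annihilates every continuous `f` with `f 0 = α * f 1`, hence,
by dominated convergence, every bounded pointwise limit of such functions. Multiplying a bounded
continuous function by cutoffs that vanish at `0` and `1` shows that `μ₀ = β • μ₁` away from the
endpoints, which settles the middle pieces, since they avoid `0` and `1`. The limit of
`α • (tent at 0) + (tent at 1)` gives `α μ₀{0} + μ₀{1} = β (α μ₁{0} + μ₁{1})`, and the end
pieces split into such an endpoint plus a set avoiding both endpoints.
-/

open ContinuousMap MeasureTheory

open Filter Topology Metric Set

section Tent

variable {X : Type*} [PseudoMetricSpace X] {C : Set X} {k : ℕ} {x : X}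

noncomputable def tent (C : Set X) (k : ℕ) : C(X, ℝ) :=
  ⟨fun x => max 0 (1 - (k + 1) * infDist x C), by fun_prop⟩

theorem tent_apply (C : Set X) (k : ℕ) (x : X) :
    tent C k x = max 0 (1 - (k + 1) * infDist x C) := rfl

theorem tent_apply_of_mem (hx : x ∈ C) : tent C k x = 1 := by
  simp [tent_apply, infDist_zero_of_mem hx]

theorem tent_eq_zero_of_one_le_infDist (hx : 1 ≤ infDist x C) : tent C k x = 0 := by
  have : (1 : ℝ) ≤ (k + 1) * infDist x C := by nlinarith [(k.cast_nonneg : (0 : ℝ) ≤ k)]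
  simp [tent_apply, this]

theorem tent_nonneg : 0 ≤ tent C k x := le_max_left _ _

theorem tent_le_one : tent C k x ≤ 1 :=
  max_le zero_le_one (sub_le_self _ (mul_nonneg (by positivity) infDist_nonneg))

theorem abs_tent_le_one : |tent C k x| ≤ 1 := by
  rw [abs_of_nonneg tent_nonneg]
  exact tent_le_one

theorem tendsto_tent (hC : IsClosed C) (hne : C.Nonempty) (x : X) :
    Tendsto (fun k => tent C k x) atTop (𝓝 (C.indicator 1 x)) := by
  by_cases hx : x ∈ C
  · simp [tent_apply_of_mem hx, hx]
  · have hd : 0 < infDist x C := (hC.notMem_iff_infDist_pos hne).1 hx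
    have hlarge : ∀ᶠ k : ℕ in atTop, 1 ≤ k * infDist x C :=
      (tendsto_natCast_atTop_atTop.atTop_mul_const hd).eventually_ge_atTop 1
    rw [indicator_of_notMem hx]
    refine tendsto_const_nhds.congr' ?_
    filter_upwards [hlarge] with k hk
    simp only [tent_apply]
    have : (1 : ℝ) ≤ (k + 1) * infDist x C := by nlinarith
    simp [this]

end Tent

theorem integral_eq_mul_integral_of_tendsto {X : Type*} [TopologicalSpace X] [MeasurableSpace X]
    [OpensMeasurableSpace X] {μ ν : Measure X} [IsFiniteMeasure μ] [IsFiniteMeasure ν] {c B : ℝ}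
    {F : ℕ → C(X, ℝ)} {g : X → ℝ} (hF : ∀ k, ∫ x, F k x ∂μ = c * ∫ x, F k x ∂ν)
    (hB : ∀ k x, |F k x| ≤ B) (hg : ∀ x, Tendsto (fun k => F k x) atTop (𝓝 (g x))) :
    ∫ x, g x ∂μ = c * ∫ x, g x ∂ν := by
  have hlim : ∀ ρ : Measure X, IsFiniteMeasure ρ →
      Tendsto (fun k => ∫ x, F k x ∂ρ) atTop (𝓝 (∫ x, g x ∂ρ)) := fun ρ _ =>
    tendsto_integral_of_dominated_convergence (fun _ => B)
      (fun k => (F k).continuous.aestronglyMeasurable) (integrable_const B)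
      (fun k => .of_forall (hB k)) (.of_forall hg)
  refine tendsto_nhds_unique ((hlim μ inferInstance).congr hF) ?_
  exact (hlim ν inferInstance).const_mul c

section UnitInterval

open unitInterval

variable {α β : ℝ} {μ₀ μ₁ : Measure I} [IsFiniteMeasure μ₀] [IsFiniteMeasure μ₁]

theorem tent_zero_apply_one (k : ℕ) : tent ({0} : Set I) k 1 = 0 :=
  tent_eq_zero_of_one_le_infDist (by simp [infDist_singleton, Subtype.dist_eq])

theorem tent_one_apply_zero (k : ℕ) : tent ({1} : Set I) k 0 = 0 :=
  tent_eq_zero_of_one_le_infDist (by simp [infDist_singleton, Subtype.dist_eq])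

theorem measureReal_endpoints_eq
    (h : ∀ f : C(I, ℝ), f 0 = α * f 1 → ∫ x, f x ∂μ₀ = β * ∫ x, f x ∂μ₁) :
    α * μ₀.real {0} + μ₀.real {1} = β * (α * μ₁.real {0} + μ₁.real {1}) := by
  have hint : ∀ (μ : Measure I) [IsFiniteMeasure μ],
      ∫ x, α * ({0} : Set I).indicator 1 x + ({1} : Set I).indicator 1 x ∂μ =
        α * μ.real {0} + μ.real {1} := fun μ _ => by
    have hi : ∀ a : I, Integrable (({a} : Set I).indicator (1 : I → ℝ)) μ := fun a =>
      (integrable_const (1 : ℝ)).indicator (measurableSet_singleton a)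
    rw [integral_add ((hi 0).const_mul α) (hi 1), integral_const_mul,
      integral_indicator_one (measurableSet_singleton 0),
      integral_indicator_one (measurableSet_singleton 1)]
  rw [← hint μ₀, ← hint μ₁]
  refine integral_eq_mul_integral_of_tendsto (F := fun k => α • tent {0} k + tent {1} k)
    (B := |α| + 1) (fun k => h _ ?_) (fun k x => ?_) (fun x => ?_)
  · simp [tent_apply_of_mem, tent_zero_apply_one, tent_one_apply_zero]
  · calc |α * tent {0} k x + tent {1} k x| ≤ |α| * 1 + 1 := by
          grw [abs_add_le, abs_mul, abs_tent_le_one, abs_tent_le_one]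
      _ = |α| + 1 := by ring
  · exact ((tendsto_tent isClosed_singleton (singleton_nonempty _) x).const_mul α).add
      (tendsto_tent isClosed_singleton (singleton_nonempty _) x)

theorem restrict_compl_endpoints_eq (hβ : 0 ≤ β)
    (h : ∀ f : C(I, ℝ), f 0 = α * f 1 → ∫ x, f x ∂μ₀ = β * ∫ x, f x ∂μ₁) :
    μ₀.restrict {0, 1}ᶜ = β.toNNReal • μ₁.restrict {0, 1}ᶜ := by
  set C : Set I := {0, 1}
  have hC : IsClosed C := (Set.toFinite C).isClosed
  refine ext_of_forall_integral_eq_of_IsFiniteMeasure fun f => ?_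
  rw [integral_smul_nnreal_measure, NNReal.smul_def, Real.coe_toNNReal _ hβ, smul_eq_mul,
    ← integral_indicator hC.isOpen_compl.measurableSet,
    ← integral_indicator hC.isOpen_compl.measurableSet]
  refine integral_eq_mul_integral_of_tendsto (F := fun k => f.toContinuousMap * (1 - tent C k))
    (B := ‖f‖) (fun k => h _ ?_) (fun k x => ?_) (fun x => ?_)
  · simp [C, tent_apply_of_mem]
  · have h0 := tent_nonneg (C := C) (k := k) (x := x)
    have h1 := tent_le_one (C := C) (k := k) (x := x)
    calc |f x * (1 - tent C k x)| ≤ ‖f‖ * 1 := by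
          rw [abs_mul]
          gcongr
          · exact f.norm_coe_le_norm x
          · exact abs_le.2 ⟨by linarith, by linarith⟩
      _ = ‖f‖ := mul_one _
  · have hlim : Cᶜ.indicator f x = f x * (1 - C.indicator 1 x) := by
      by_cases hx : x ∈ C <;> simp [hx]
    rw [hlim]
    exact ((tendsto_tent hC (insert_nonempty _ _) x).const_sub 1).const_mul (f x)

theorem measureReal_eq_of_notMem_endpoints (hβ : 0 ≤ β)
    (h : ∀ f : C(I, ℝ), f 0 = α * f 1 → ∫ x, f x ∂μ₀ = β * ∫ x, f x ∂μ₁)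
    {A : Set I} (h0 : 0 ∉ A) (h1 : 1 ∉ A) : μ₀.real A = β * μ₁.real A := by
  have hA : A ⊆ {0, 1}ᶜ := fun x hx hx01 => by
    rcases hx01 with rfl | rfl
    exacts [h0 hx, h1 hx]
  have hrestrict (μ : Measure I) : (μ.restrict {0, 1}ᶜ).real A = μ.real A := by
    simp only [measureReal_def, Measure.restrict_eq_self μ hA]
  rw [← hrestrict μ₀, ← hrestrict μ₁, restrict_compl_endpoints_eq hβ h,
    measureReal_nnreal_smul_apply, Real.coe_toNNReal _ hβ]

end UnitInterval

theorem measureReal_eq_sdiff_add_singleton {X : Type*} [MeasurableSpace X]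
    [MeasurableSingletonClass X] {μ : Measure X} [IsFiniteMeasure μ] {s : Set X} {a : X}
    (ha : a ∈ s) : μ.real s = μ.real (s \ {a}) + μ.real {a} := by
  rw [← measureReal_sdiff_add_inter (measurableSet_singleton a),
    inter_eq_right.2 (singleton_subset_iff.2 ha)]

theorem stmt13 (α β : ℝ) (hβ : β ∈ Set.Ioo (0 : ℝ) 1)
    (φ : C(unitInterval, ℝ) →ₗ[ℝ] C(unitInterval, ℝ))
    (hsub : ∀ f : C(unitInterval, ℝ), f 0 = α * f 1 → φ f 0 = β * φ f 1)
    (μ₀ μ₁ : Measure unitInterval)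
    [IsProbabilityMeasure μ₀] [IsProbabilityMeasure μ₁]
    (hμ₀ : ∀ f : C(unitInterval, ℝ), φ f 0 = ∫ t, f t ∂μ₀)
    (hμ₁ : ∀ f : C(unitInterval, ℝ), φ f 1 = ∫ t, f t ∂μ₁)
    (n : ℕ) (hn : 2 ≤ n) (X : Fin n → Set unitInterval)
    (hdisj : Pairwise (Function.onFun Disjoint X))
    (h0 : (0 : unitInterval) ∈ X ⟨0, by omega⟩)
    (h1 : (1 : unitInterval) ∈ X ⟨n - 1, by omega⟩) :
    (∀ i : Fin n, 1 ≤ i.val → i.val ≤ n - 2 →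
      (μ₀ (X i)).toReal = β * (μ₁ (X i)).toReal) ∧
    α * (μ₀ (X ⟨0, by omega⟩)).toReal + (μ₀ (X ⟨n - 1, by omega⟩)).toReal =
      β * (α * (μ₁ (X ⟨0, by omega⟩)).toReal + (μ₁ (X ⟨n - 1, by omega⟩)).toReal) := by
  have h : ∀ f : C(unitInterval, ℝ), f 0 = α * f 1 → ∫ x, f x ∂μ₀ = β * ∫ x, f x ∂μ₁ :=
    fun f hf => by rw [← hμ₀, ← hμ₁, hsub f hf]
  have hoff {A : Set unitInterval} : 0 ∉ A → 1 ∉ A → μ₀.real A = β * μ₁.real A :=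
    measureReal_eq_of_notMem_endpoints hβ.1.le h
  have hnotMem {i j : Fin n} {x : unitInterval} (hij : i.val ≠ j.val) (hx : x ∈ X j) : x ∉ X i :=
    fun hxi => Set.disjoint_left.1 (hdisj (Fin.ne_of_val_ne hij)) hxi hx
  set first : Fin n := ⟨0, by omega⟩
  set last : Fin n := ⟨n - 1, by omega⟩
  have h1first : (1 : unitInterval) ∉ X first := hnotMem (show 0 ≠ n - 1 by omega) h1
  have h0last : (0 : unitInterval) ∉ X last := hnotMem (show n - 1 ≠ 0 by omega) h0
  refine ⟨fun i hi1 hi2 =>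
    hoff (hnotMem (show i.val ≠ 0 by omega) h0) (hnotMem (show i.val ≠ n - 1 by omega) h1), ?_⟩
  simp only [← measureReal_def]
  rw [measureReal_eq_sdiff_add_singleton h0, measureReal_eq_sdiff_add_singleton (μ := μ₁) h0,
    measureReal_eq_sdiff_add_singleton h1, measureReal_eq_sdiff_add_singleton (μ := μ₁) h1,
    hoff (A := X first \ {0}) (fun hx => hx.2 rfl) (fun hx => h1first hx.1),
    hoff (A := X last \ {1}) (fun hx => h0last hx.1) (fun hx => hx.2 rfl)]
  linear_combination measureReal_endpoints_eq h
end

section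
/- If α, β ∈ (0,1) and there exists a unital positive linear map φ on C[0,1] which sends C[0,1]_α into C[0,1]_β, then β ≥ α. -/
open ContinuousMap

theorem stmt15 (α β : ℝ) (hα : α ∈ Set.Ioo (0 : ℝ) 1) (hβ : β ∈ Set.Ioo (0 : ℝ) 1)
    (φ : C(unitInterval, ℝ) →ₗ[ℝ] C(unitInterval, ℝ))
    (hunital : φ 1 = 1)
    (hpos : ∀ f : C(unitInterval, ℝ), (∀ x, 0 ≤ f x) → ∀ x, 0 ≤ φ f x)
    (hsub : ∀ f : C(unitInterval, ℝ), f 0 = α * f 1 → φ f 0 = β * φ f 1) :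
    α ≤ β := by
  obtain ⟨hα0, hα1⟩ := hα
  obtain ⟨hβ0, hβ1⟩ := hβ
  set X : C(unitInterval, ℝ) := ⟨fun x => (x : ℝ), by continuity⟩ with hX
  set c : ℝ := α / (1 - α) with hc
  have hc' : c * (1 - α) = α := div_mul_cancel₀ α (by linarith)
  have hf := hsub (X + c • 1) (by
    simp [hX]
    nlinarith)
  have ha : 0 ≤ (φ X) 0 := hpos X (fun x => x.2.1) 0
  have hb : (φ X) 1 ≤ 1 := by
    have := hpos (1 - X) (fun x => by simpa [hX] using x.2.2) 1
    have h1 : φ (1 - X) = 1 - φ X := by rw [map_sub, hunital]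
    rw [h1] at this
    simpa using this
  have key : (φ X) 0 + c = β * ((φ X) 1 + c) := by
    have h2 : φ (X + c • 1) = φ X + c • (1 : C(unitInterval, ℝ)) := by
      rw [map_add, map_smul, hunital]
    rw [h2] at hf
    simpa using hf
  nlinarith [mul_le_of_le_one_right (le_of_lt hβ0) hb]
end

section
/- Let X, Y be compact metrizable spaces, p, q ∈ X distinct, z, w ∈ Y, and α ∈ (0,1). Let φ : C(X) → C(Y) be a unital positive linear map sending C(X)_{(p,q,α)} into C(Y)_{(z,w,α)}. Then φ(f)(z) = f(p) and φ(f)(w) = f(q) for all f ∈ C(X). -/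
/-! Write `L f = φ f z` and `M f = φ f w`. Subtracting from `f` the constant that moves it into
`C(X)_{(p,q,α)}` shows that the functionals `L - α M` and `δ_p - α δ_q` have nested kernels and
agree at `1`, hence coincide. For a peak function `0 ≤ G ≤ 1` with `G p = 1`, `G q = 0` this reads
`L G = 1 + α M G`, and `L G ≤ L 1 = 1` forces `M G = 0`. Every nonnegative function vanishing at
`q` is dominated by a multiple of such a `G`, so `M` kills all of them, which for a positive unital
functional means `M = δ_q`; then `L = δ_p`. -/

open ContinuousMap

theorem LinearMap.eq_of_ker_le_of_apply_eq {K V : Type*} [Field K] [AddCommGroup V] [Module K V]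
    {A B : V →ₗ[K] K} (hker : LinearMap.ker B ≤ LinearMap.ker A) {e : V} (he : B e ≠ 0)
    (hAB : A e = B e) : A = B := by
  ext v
  have hv : v - (B v / B e) • e ∈ LinearMap.ker B := by
    simp [div_mul_cancel₀ _ he]
  have := hker hv
  simp only [LinearMap.mem_ker, map_sub, map_smul, hAB, smul_eq_mul, div_mul_cancel₀ _ he] at this
  exact sub_eq_zero.mp this

section
variable {X : Type*} [TopologicalSpace X]

theorem LinearMap.apply_sub_mul_apply_eq {Y : Type*} [TopologicalSpace Y]
    (φ : C(X, ℝ) →ₗ[ℝ] C(Y, ℝ)) (hφ : φ 1 = 1) {α : ℝ} (hα : α ≠ 1) {p q : X} {z w : Y}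
    (h : ∀ f, f p = α * f q → φ f z = α * φ f w) (f : C(X, ℝ)) :
    φ f z - α * φ f w = f p - α * f q := by
  have hker : LinearMap.ker ((evalCLM ℝ p).toLinearMap - α • (evalCLM ℝ q).toLinearMap) ≤
      LinearMap.ker ((evalCLM ℝ z).toLinearMap ∘ₗ φ - α • (evalCLM ℝ w).toLinearMap ∘ₗ φ) :=
    fun g hg => by simpa [sub_eq_zero] using h g (by simpa [sub_eq_zero] using hg)
  have := LinearMap.eq_of_ker_le_of_apply_eq hker (e := 1)
    (by simp [sub_eq_zero, hα.symm]) (by simp [hφ])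
  simpa using LinearMap.congr_fun this f

theorem ContinuousMap.exists_le_smul_of_apply_eq_zero [CompactSpace X] [T2Space X] {p q : X}
    (hpq : p ≠ q) (f : C(X, ℝ)) (hfq : f q = 0) :
    ∃ (c : ℝ) (G : C(X, ℝ)), 0 ≤ G ∧ G ≤ 1 ∧ G p = 1 ∧ G q = 0 ∧ f ≤ c • G := by
  obtain ⟨u, huq, hup, hu⟩ := exists_continuous_zero_one_of_isClosed isClosed_singleton
    isClosed_singleton (Set.disjoint_singleton.2 hpq.symm)
  set c := ‖f‖ + 1
  have hc : 0 < c := by positivity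
  have hfc : ∀ x, c⁻¹ * f x ≤ 1 := fun x => by
    rw [inv_mul_le_one₀ hc]
    linarith [le_abs_self (f x), f.norm_coe_le_norm x, Real.norm_eq_abs (f x)]
  refine ⟨c, c⁻¹ • f ⊔ u, le_sup_of_le_right fun x => (hu x).1,
    sup_le hfc fun x => (hu x).2, ?_, ?_, ?_⟩
  · simp [hup rfl, hfc p]
  · simp [huq rfl, hfq]
  · calc f = c • c⁻¹ • f := by rw [smul_smul, mul_inv_cancel₀ hc.ne', one_smul]
      _ ≤ c • (c⁻¹ • f ⊔ u) := smul_le_smul_of_nonneg_left le_sup_left hc.le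

namespace PositiveLinearMap

theorem apply_eq_of_map_eq_zero (Λ : C(X, ℝ) →ₚ[ℝ] ℝ) (hΛ : Λ 1 = 1) {q : X}
    (h : ∀ f : C(X, ℝ), 0 ≤ f → f q = 0 → Λ f = 0) (f : C(X, ℝ)) : Λ f = f q := by
  set g := f - f q • 1
  have hg : Λ |g| = 0 := h _ (abs_nonneg g) (by simp [g])
  have hlow : Λ (-g) ≤ Λ |g| := Λ.monotone' (neg_le_abs g)
  have hup : Λ g ≤ Λ |g| := Λ.monotone' (le_abs_self g)
  have : Λ g = Λ f - f q := by simp [g, hΛ]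
  rw [map_neg] at hlow
  linarith

theorem apply_eq_of_sub_mul_apply_eq [CompactSpace X] [T2Space X] (L M : C(X, ℝ) →ₚ[ℝ] ℝ)
    (hL : L 1 = 1) {α : ℝ} (hα : 0 < α) {p q : X} (hpq : p ≠ q)
    (hrel : ∀ f, L f - α * M f = f p - α * f q) (f : C(X, ℝ)) : M f = f q := by
  have hM : M 1 = 1 := by
    have h := hrel 1
    simp only [hL, one_apply] at h
    exact (mul_right_inj' hα.ne').mp (by linarith)
  refine M.apply_eq_of_map_eq_zero hM (fun g hg hgq => ?_) f
  obtain ⟨c, G, hG0, hG1, hGp, hGq, hgG⟩ := exists_le_smul_of_apply_eq_zero hpq g hgq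
  have hMG : M G = 0 := by
    have hLG : L G ≤ 1 := hL ▸ L.monotone' hG1
    have hMG0 : 0 ≤ M G := by simpa using M.monotone' hG0
    have := hrel G
    rw [hGp, hGq] at this
    nlinarith
  have hg0 : 0 ≤ M g := by simpa using M.monotone' hg
  have hgc : M g ≤ c * M G := by simpa using M.monotone' hgG
  rw [hMG, mul_zero] at hgc
  linarith

end PositiveLinearMap

end

theorem stmt17_general (X Y : Type*) [MetricSpace X] [CompactSpace X]
    [MetricSpace Y]
    (p q : X) (hpq : p ≠ q) (z w : Y)
    (α : ℝ) (hα : α ∈ Set.Ioo (0 : ℝ) 1)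
    (φ : C(X, ℝ) →ₗ[ℝ] C(Y, ℝ))
    (hunital : φ 1 = 1)
    (hpos : ∀ f : C(X, ℝ), (∀ x, 0 ≤ f x) → ∀ y, 0 ≤ φ f y)
    (hsub : ∀ f : C(X, ℝ), f p = α * f q → φ f z = α * φ f w) :
    ∀ f : C(X, ℝ), φ f z = f p ∧ φ f w = f q := by
  let ev (y : Y) : C(X, ℝ) →ₚ[ℝ] ℝ :=
    .mk₀ ((evalCLM ℝ y).toLinearMap ∘ₗ φ) fun f hf => hpos f hf y
  have hrel := φ.apply_sub_mul_apply_eq hunital hα.2.ne hsub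
  have hw : ∀ f : C(X, ℝ), φ f w = f q :=
    (ev z).apply_eq_of_sub_mul_apply_eq (ev w) (congrArg (· z) hunital) hα.1 hpq hrel
  exact fun f => ⟨by linear_combination hrel f + α * hw f, hw f⟩

theorem stmt17 (X Y : Type*) [MetricSpace X] [CompactSpace X]
    [MetricSpace Y] [CompactSpace Y]
    (p q : X) (hpq : p ≠ q) (z w : Y)
    (α : ℝ) (hα : α ∈ Set.Ioo (0 : ℝ) 1)
    (φ : C(X, ℝ) →ₗ[ℝ] C(Y, ℝ))
    (hunital : φ 1 = 1)
    (hpos : ∀ f : C(X, ℝ), (∀ x, 0 ≤ f x) → ∀ y, 0 ≤ φ f y)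
    (hsub : ∀ f : C(X, ℝ), f p = α * f q → φ f z = α * φ f w) :
    ∀ f : C(X, ℝ), φ f z = f p ∧ φ f w = f q :=
  stmt17_general X Y p q hpq z w α hα φ hunital hpos hsub
end
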